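/- arXiv:1712.06953 — 2 statements merged into one kernel-verified Lean document; each statement's English description precedes it below -/
import Mathlib

section
/- Let s be a cycle (the union of two equal paths traversed in opposite directions, i.e., a segment) and r a cycle that meet only in a single vertex v, where v is an endpoint of the path underlying s. Then for the other endpoint a of s and any vertex b ≠ v of r, there exist two walks l₁, l₂ from a to b whose combined edge multiset equals the edge multiset of s together with the edges of r. -/
/-- Let `s` be a segment with underlying path `p` from `a` to `v` (a closed walk
traversing each edge of `p` exactly twice), and let `r` be a cycle meeting `p` only in
the vertex `v`.  Then for any vertex `b ≠ v` of `r` there are two walks `l₁, l₂` from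
`a` to `b` whose combined edge multiset equals the edges of `p` taken twice together
with the edges of `r`. -/
theorem stmt_9 {V : Type} [Fintype V] [DecidableEq V]
    (G : SimpleGraph V)
    (a v : V) (p : G.Walk a v) (hp : p.IsPath)
    (r : G.Walk v v) (hr : r.IsCycle)
    (hmeet : ∀ x, x ∈ p.support → x ∈ r.support → x = v)
    (b : V) (hb : b ∈ r.support) (hbv : b ≠ v) :
    ∃ (l₁ l₂ : G.Walk a b),
      (↑l₁.edges + ↑l₂.edges : Multiset (Sym2 V)) =
        ↑p.edges + ↑p.edges + ↑r.edges := by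
  refine ⟨p.append (r.takeUntil b hb), p.append (r.dropUntil b hb).reverse, ?_⟩
  have hsplit : r.edges = (r.takeUntil b hb).edges ++ (r.dropUntil b hb).edges := by
    conv_lhs => rw [← SimpleGraph.Walk.take_spec r hb]
    rw [SimpleGraph.Walk.edges_append]
  rw [SimpleGraph.Walk.edges_append, SimpleGraph.Walk.edges_append,
    SimpleGraph.Walk.edges_reverse, hsplit, ← Multiset.coe_add, ← Multiset.coe_add,
    ← Multiset.coe_add, Multiset.coe_reverse]
  abel
end

section
/- Let G be a graph, v a vertex of G of degree at least 4, and e₁ = vu, e₂ = vw two edges incident to v. Let G′ be obtained from G by deleting e₁ and e₂ and adding the edge uw. If G′ has a cycle double cover, then so does G. -/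
/-- A cycle double cover of `G`: a family of cycles of `G` such that every edge of `G`
lies on exactly two members of the family. -/
def HasCycleDoubleCover {V : Type} (G : SimpleGraph V) : Prop :=
  ∃ (n : ℕ) (f : Fin n → Σ v : V, G.Walk v v),
    (∀ i, (f i).2.IsCycle) ∧
    ∀ e ∈ G.edgeSet, Nat.card {i : Fin n // e ∈ (f i).2.edges} = 2

/-!
A cycle of `G'` through the new edge `uw` is a path `t` from `w` to `u` closed by `uw`.
Replacing `uw` by `uv, vw` closes `t` through `v` instead: if `v` is not on `t` this is a
cycle of `G`, otherwise it splits at `v` into two cycles of `G`. Rerouting the two cycles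
of the cover through `uw` in this way, and transferring all others to `G`, covers `vu` and
`vw` twice and every other edge of `G` twice as before. If `uw` is already an edge of `G`,
only one of the two cycles is rerouted and the triangle `vuw` is added instead.

Families of cycles are handled as lists of closed walks, through the multiset of the edges
they traverse.
-/

namespace SimpleGraph

variable {V : Type} {G H : SimpleGraph V}

namespace Walk

theorem exists_eq_append_cons_of_mem_darts {x y : V} {p : G.Walk x y} {d : G.Dart}
    (hd : d ∈ p.darts) :
    ∃ (p₁ : G.Walk x d.fst) (p₂ : G.Walk d.snd y), p = p₁.append (cons d.adj p₂) := by
  induction p with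
  | nil => simp at hd
  | cons h q ih =>
    rcases List.mem_cons.mp hd with rfl | hd
    · exact ⟨nil, q, rfl⟩
    · obtain ⟨p₁, p₂, rfl⟩ := ih hd
      exact ⟨cons h p₁, p₂, rfl⟩

theorem IsCycle.exists_isPath_edges_eq {x u w : V} {p : G.Walk x x} (hp : p.IsCycle)
    (huw : s(u, w) ∈ p.edges) :
    ∃ t : G.Walk w u, t.IsPath ∧ (p.edges : Multiset (Sym2 V)) = s(u, w) ::ₘ t.edges := by
  wlog hd : ∃ d ∈ p.darts, d.fst = u ∧ d.snd = w generalizing u w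
  · obtain ⟨d, hd', hde⟩ := List.mem_map.mp (p.edges_eq_map_darts ▸ huw)
    obtain ⟨t, ht, hedges⟩ := this (Sym2.eq_swap ▸ huw)
      ⟨d, hd', (dart_edge_eq_mk'_iff'.mp hde).resolve_left fun h => hd ⟨d, hd', h⟩⟩
    exact ⟨t.reverse, ht.reverse, by simpa [Sym2.eq_swap] using hedges⟩
  obtain ⟨⟨⟨a, b⟩, hab⟩, hd, rfl, rfl⟩ := hd
  obtain ⟨p₁, p₂, rfl⟩ := exists_eq_append_cons_of_mem_darts hd
  refine ⟨p₂.append p₁, IsPath.mk' ?_, ?_⟩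
  · have hperm : (p₂.append p₁).support.Perm (p₁.append (cons hab p₂)).support.tail := by
      simpa [support_append, tail_support_append] using List.perm_append_comm
    exact hperm.nodup_iff.mpr hp.support_nodup
  · simpa [edges_append] using List.perm_middle.trans (List.perm_append_comm.cons _)

end Walk

def sumEdges (l : List (Σ x : V, G.Walk x x)) : Multiset (Sym2 V) :=
  (l.map fun c => (c.2.edges : Multiset (Sym2 V))).sum

@[simp] theorem sumEdges_nil : sumEdges ([] : List (Σ x : V, G.Walk x x)) = 0 := rfl

@[simp] theorem sumEdges_cons (c : Σ x : V, G.Walk x x) (l : List (Σ x : V, G.Walk x x)) :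
    sumEdges (c :: l) = c.2.edges + sumEdges l := by
  simp [sumEdges]

@[simp] theorem sumEdges_append (l₁ l₂ : List (Σ x : V, G.Walk x x)) :
    sumEdges (l₁ ++ l₂) = sumEdges l₁ + sumEdges l₂ := by
  simp [sumEdges]

theorem mem_sumEdges {l : List (Σ x : V, G.Walk x x)} {e : Sym2 V} :
    e ∈ sumEdges l ↔ ∃ c ∈ l, e ∈ c.2.edges := by
  induction l with
  | nil => simp
  | cons c l ih => simp [ih]

theorem sumEdges_subset_edgeSet {l : List (Σ x : V, G.Walk x x)} {e : Sym2 V}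
    (he : e ∈ sumEdges l) : e ∈ G.edgeSet := by
  obtain ⟨c, -, hc⟩ := mem_sumEdges.mp he
  exact c.2.edges_subset_edgeSet hc

theorem sumEdges_perm {l₁ l₂ : List (Σ x : V, G.Walk x x)} (h : l₁.Perm l₂) :
    sumEdges l₁ = sumEdges l₂ :=
  (h.map _).sum_eq

theorem sumEdges_map_mapLe (h : H ≤ G) (l : List (Σ x : V, H.Walk x x)) :
    sumEdges (l.map fun c => (⟨c.1, c.2.mapLe h⟩ : Σ x : V, G.Walk x x)) = sumEdges l := by
  simp [sumEdges, Function.comp_def]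

theorem count_sumEdges_ofFn [DecidableEq V] {n : ℕ} (f : Fin n → Σ x : V, G.Walk x x)
    (hf : ∀ i, (f i).2.IsTrail) (e : Sym2 V) :
    (sumEdges (List.ofFn f)).count e = Nat.card {i : Fin n // e ∈ (f i).2.edges} := by
  have hcount (i : Fin n) :
      Multiset.count e (f i).2.edges = if e ∈ (f i).2.edges then 1 else 0 :=
    Multiset.count_eq_of_nodup (by simpa using (hf i).edges_nodup)
  simp only [sumEdges, List.map_ofFn, List.sum_ofFn, Multiset.count_sum', Function.comp_apply,
    hcount, Finset.sum_boole, Nat.card_eq_fintype_card, Fintype.card_subtype, Nat.cast_id]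

theorem _root_.hasCycleDoubleCover_iff [DecidableEq V] :
    HasCycleDoubleCover G ↔ ∃ l : List (Σ x : V, G.Walk x x),
      (∀ c ∈ l, c.2.IsCycle) ∧ ∀ e ∈ G.edgeSet, (sumEdges l).count e = 2 := by
  constructor
  · rintro ⟨n, f, hf, hcover⟩
    refine ⟨List.ofFn f, by simpa [List.mem_ofFn] using hf, fun e he => ?_⟩
    rw [count_sumEdges_ofFn f (fun i => (hf i).isTrail), hcover e he]
  · rintro ⟨l, hl, hcover⟩
    have hget (i : Fin l.length) : (l.get i).2.IsCycle := hl _ (List.get_mem l i)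
    refine ⟨l.length, l.get, hget, fun e he => ?_⟩
    rw [← count_sumEdges_ofFn l.get (fun i => (hget i).isTrail), List.ofFn_get, hcover e he]

theorem exists_cycles_sumEdges_eq_path_add [DecidableEq V] {u v w : V}
    (hu : G.Adj v u) (hw : G.Adj v w) (huw : u ≠ w) {t : G.Walk w u} (ht : t.IsPath)
    (hvu : s(v, u) ∉ t.edges) (hvw : s(v, w) ∉ t.edges) :
    ∃ L : List (Σ x : V, G.Walk x x), (∀ c ∈ L, c.2.IsCycle) ∧
      sumEdges L = t.edges + {s(v, u), s(v, w)} := by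
  by_cases hv : v ∈ t.support
  · obtain ⟨q₁, q₂, rfl⟩ : ∃ (q₁ : G.Walk w v) (q₂ : G.Walk v u), t = q₁.append q₂ :=
      ⟨_, _, (t.take_spec hv).symm⟩
    have hq₁ : (Walk.cons hw q₁).IsCycle := by
      refine (Walk.cons_isCycle_iff _ _).mpr ⟨ht.of_append_left, fun h => hvw ?_⟩
      simp [h]
    have hq₂ : (Walk.cons hu q₂.reverse).IsCycle := by
      refine (Walk.cons_isCycle_iff _ _).mpr ⟨ht.of_append_right.reverse, fun h => hvu ?_⟩
      simp_all
    refine ⟨[⟨v, Walk.cons hw q₁⟩, ⟨v, Walk.cons hu q₂.reverse⟩], by simp [hq₁, hq₂], ?_⟩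
    simp only [sumEdges_cons, sumEdges_nil, Walk.edges_cons, Walk.edges_reverse,
      Walk.edges_append, add_zero, ← Multiset.cons_coe, ← Multiset.coe_add, Multiset.coe_reverse,
      Multiset.insert_eq_cons, ← Multiset.singleton_add]
    abel
  · have hcyc : (Walk.cons hu.symm (Walk.cons hw t)).IsCycle := by
      refine (Walk.cons_isCycle_iff _ _).mpr ⟨(Walk.cons_isPath_iff _ _).mpr ⟨ht, hv⟩, ?_⟩
      have huv : s(u, v) ∉ t.edges := fun h => hv (t.snd_mem_support_of_mem_edges h)
      simp [huw, huv, hu.ne']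
    refine ⟨[⟨u, Walk.cons hu.symm (Walk.cons hw t)⟩], by simp [hcyc], ?_⟩
    simp only [sumEdges_cons, sumEdges_nil, Walk.edges_cons, add_zero, ← Multiset.cons_coe,
      Multiset.insert_eq_cons, ← Multiset.singleton_add, Sym2.eq_swap (a := u)]
    abel

theorem exists_cycles_sumEdges_add_eq_of_mem_edges [DecidableEq V] {x u v w : V}
    (hu : G.Adj v u) (hw : G.Adj v w) {p : H.Walk x x} (hp : p.IsCycle)
    (huw : s(u, w) ∈ p.edges) (hvu : s(v, u) ∉ p.edges) (hvw : s(v, w) ∉ p.edges)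
    (hpG : ∀ e ∈ p.edges, e ≠ s(u, w) → e ∈ G.edgeSet) :
    ∃ L : List (Σ y : V, G.Walk y y), (∀ c ∈ L, c.2.IsCycle) ∧
      sumEdges L + {s(u, w)} = p.edges + {s(v, u), s(v, w)} := by
  obtain ⟨t, ht, hpt⟩ := hp.exists_isPath_edges_eq huw
  have hmem {e : Sym2 V} (he : e ∈ t.edges) : e ∈ p.edges := by
    have : e ∈ (p.edges : Multiset (Sym2 V)) := hpt ▸ Multiset.mem_cons_of_mem (by simpa using he)
    simpa using this
  have huwt : s(u, w) ∉ t.edges := by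
    have := hpt ▸ Multiset.coe_nodup.mpr hp.edges_nodup
    exact (Multiset.nodup_cons.mp this).1
  have htG (e) (he : e ∈ t.edges) : e ∈ G.edgeSet := hpG e (hmem he) (ne_of_mem_of_not_mem he huwt)
  obtain ⟨L, hL, hLt⟩ := exists_cycles_sumEdges_eq_path_add hu hw (p.adj_of_mem_edges huw).ne
    (ht.transfer htG) (by simpa using fun h => hvu (hmem h)) (by simpa using fun h => hvw (hmem h))
  refine ⟨L, hL, ?_⟩
  rw [hLt, hpt, Walk.edges_transfer, ← Multiset.singleton_add]
  abel

theorem exists_cycles_sumEdges_add_count_smul [DecidableEq V] {u v w : V}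
    (hu : G.Adj v u) (hw : G.Adj v w) (hvu : s(v, u) ∉ H.edgeSet) (hvw : s(v, w) ∉ H.edgeSet)
    (hHG : ∀ e ∈ H.edgeSet, e ≠ s(u, w) → e ∈ G.edgeSet)
    (l : List (Σ x : V, H.Walk x x)) (hl : ∀ c ∈ l, c.2.IsCycle) :
    ∃ L : List (Σ x : V, G.Walk x x), (∀ c ∈ L, c.2.IsCycle) ∧
      sumEdges L + (sumEdges l).count s(u, w) • {s(u, w)} =
        sumEdges l + (sumEdges l).count s(u, w) • {s(v, u), s(v, w)} := by
  induction l with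
  | nil => exact ⟨[], by simp, by simp⟩
  | cons c l ih =>
    obtain ⟨L, hL, hLl⟩ := ih fun c hc => hl c (List.mem_cons_of_mem _ hc)
    have hc := hl c List.mem_cons_self
    have hcG (e) (he : e ∈ c.2.edges) : e ≠ s(u, w) → e ∈ G.edgeSet :=
      hHG e (c.2.edges_subset_edgeSet he)
    by_cases huw : s(u, w) ∈ c.2.edges
    · obtain ⟨L₁, hL₁, hL₁c⟩ := exists_cycles_sumEdges_add_eq_of_mem_edges hu hw hc huw
        (fun h => hvu (c.2.edges_subset_edgeSet h)) (fun h => hvw (c.2.edges_subset_edgeSet h)) hcG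
      refine ⟨L₁ ++ L, fun c' hc' => (List.mem_append.mp hc').elim (hL₁ c') (hL c'), ?_⟩
      have hcount : (c.2.edges : Multiset (Sym2 V)).count s(u, w) = 1 :=
        Multiset.count_eq_one_of_mem (by simpa using hc.edges_nodup) (by simpa using huw)
      simp only [sumEdges_cons, sumEdges_append, Multiset.count_add, hcount, add_smul, one_smul]
      calc sumEdges L₁ + sumEdges L + ({s(u, w)} + _ • {s(u, w)})
          = (sumEdges L₁ + {s(u, w)}) + (sumEdges L + _ • {s(u, w)}) := by abel
        _ = _ := by rw [hL₁c, hLl]; abel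
    · refine ⟨⟨c.1, c.2.transfer G fun e he => hcG e he (ne_of_mem_of_not_mem he huw)⟩ :: L,
        by simpa [hc.transfer] using hL, ?_⟩
      have hcount : (c.2.edges : Multiset (Sym2 V)).count s(u, w) = 0 :=
        Multiset.count_eq_zero_of_notMem (by simpa using huw)
      simp only [sumEdges_cons, Walk.edges_transfer, Multiset.count_add, hcount, zero_add]
      rw [add_assoc, hLl, add_assoc]

theorem exists_cycles_sumEdges_eq_add_of_adj [DecidableEq V] {u v w : V}
    (hu : G.Adj v u) (hw : G.Adj v w) (huw : G.Adj u w) (hHG : H ≤ G)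
    (hvu : s(v, u) ∉ H.edgeSet) (hvw : s(v, w) ∉ H.edgeSet)
    {l : List (Σ x : V, H.Walk x x)} (hl : ∀ c ∈ l, c.2.IsCycle) (huwl : s(u, w) ∈ sumEdges l) :
    ∃ L : List (Σ x : V, G.Walk x x), (∀ c ∈ L, c.2.IsCycle) ∧
      sumEdges L = sumEdges l + 2 • {s(v, u), s(v, w)} := by
  obtain ⟨c, hcl, huwc⟩ := mem_sumEdges.mp huwl
  obtain ⟨L₁, hL₁, hL₁c⟩ := exists_cycles_sumEdges_add_eq_of_mem_edges hu hw (hl c hcl) huwc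
    (fun h => hvu (c.2.edges_subset_edgeSet h)) (fun h => hvw (c.2.edges_subset_edgeSet h))
    fun e he _ => edgeSet_mono hHG (c.2.edges_subset_edgeSet he)
  set T : G.Walk v v := Walk.cons hu (Walk.cons huw (Walk.cons hw.symm Walk.nil))
  have hT : T.IsCycle := by
    simp [T, Walk.cons_isCycle_iff, huw.ne, hu.ne, hw.ne, hu.ne', hw.ne']
  set R := (l.erase c).map fun c => (⟨c.1, c.2.mapLe hHG⟩ : Σ x : V, G.Walk x x)
  refine ⟨L₁ ++ R ++ [⟨v, T⟩], ?_, ?_⟩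
  · simp only [List.mem_append, List.mem_singleton]
    rintro c' ((hc' | hc') | rfl)
    · exact hL₁ c' hc'
    · obtain ⟨c'', hc'', rfl⟩ := List.mem_map.mp hc'
      exact (Walk.isCycle_mapLe hHG).mpr (hl c'' (List.mem_of_mem_erase hc''))
    · exact hT
  · apply add_right_cancel (b := {s(u, w)})
    calc sumEdges (L₁ ++ R ++ [⟨v, T⟩]) + {s(u, w)}
        = (sumEdges L₁ + {s(u, w)}) + sumEdges (l.erase c) + {s(v, u), s(v, w)} + {s(u, w)} := by
          simp only [sumEdges_append, sumEdges_map_mapLe, sumEdges_cons, sumEdges_nil, T,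
            Walk.edges_cons, Walk.edges_nil, Sym2.eq_swap (a := w), add_zero, ← Multiset.cons_coe,
            Multiset.insert_eq_cons, ← Multiset.singleton_add, Multiset.coe_nil, R]
          abel
      _ = _ := by
          rw [hL₁c, sumEdges_perm (List.perm_cons_erase hcl), sumEdges_cons, two_smul]
          abel

theorem count_sumEdges_add_two_smul_pair [DecidableEq V] {u v w : V}
    (hvuw : s(v, u) ≠ s(v, w)) (hvu : s(v, u) ∉ H.edgeSet) (hvw : s(v, w) ∉ H.edgeSet)
    (hGH : ∀ e ∈ G.edgeSet, e ≠ s(v, u) → e ≠ s(v, w) → e ∈ H.edgeSet)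
    {l : List (Σ x : V, H.Walk x x)} (hl : ∀ e ∈ H.edgeSet, (sumEdges l).count e = 2)
    {e : Sym2 V} (he : e ∈ G.edgeSet) :
    (sumEdges l + 2 • {s(v, u), s(v, w)}).count e = 2 := by
  have hzero {e : Sym2 V} (he : e ∉ H.edgeSet) : (sumEdges l).count e = 0 :=
    Multiset.count_eq_zero.mpr fun h => he (sumEdges_subset_edgeSet h)
  rw [Multiset.count_add, Multiset.count_nsmul]
  by_cases heu : e = s(v, u)
  · simp [heu, hzero hvu, hvuw]
  by_cases hew : e = s(v, w)
  · simp [hew, hzero hvw, hvuw.symm]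
  · simp [hl e (hGH e he heu hew), heu, hew]

theorem _root_.HasCycleDoubleCover.of_splitOff {u v w : V} (hu : G.Adj v u) (hw : G.Adj v w)
    (huw : u ≠ w) (hvu : s(v, u) ∉ H.edgeSet) (hvw : s(v, w) ∉ H.edgeSet)
    (huwH : s(u, w) ∈ H.edgeSet) (hHG : ∀ e ∈ H.edgeSet, e ≠ s(u, w) → e ∈ G.edgeSet)
    (hGH : ∀ e ∈ G.edgeSet, e ≠ s(v, u) → e ≠ s(v, w) → e ∈ H.edgeSet)
    (hH : HasCycleDoubleCover H) : HasCycleDoubleCover G := by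
  classical
  obtain ⟨l, hl, hl2⟩ := hasCycleDoubleCover_iff.mp hH
  have hcount {e} :=
    count_sumEdges_add_two_smul_pair (by simp [huw, hu.ne']) hvu hvw hGH hl2 (e := e)
  rw [hasCycleDoubleCover_iff]
  by_cases huwG : G.Adj u w
  · have hle : H ≤ G := edgeSet_subset_edgeSet.mp fun e he => by
      rcases eq_or_ne e s(u, w) with rfl | h
      exacts [huwG, hHG e he h]
    obtain ⟨L, hL, hLl⟩ := exists_cycles_sumEdges_eq_add_of_adj hu hw huwG hle hvu hvw hl
      (Multiset.count_pos.mp (by simp [hl2 _ huwH]))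
    exact ⟨L, hL, fun e he => hLl ▸ hcount he⟩
  · obtain ⟨L, hL, hLl⟩ := exists_cycles_sumEdges_add_count_smul hu hw hvu hvw hHG l hl
    refine ⟨L, hL, fun e he => ?_⟩
    have hne : e ≠ s(u, w) := fun h => huwG (by rwa [h] at he)
    have hcnt := congrArg (Multiset.count e) hLl
    rw [hl2 _ huwH, hcount he] at hcnt
    simpa [hne] using hcnt

end SimpleGraph

theorem stmt_14_general {V : Type}
    (G : SimpleGraph V)
    (v u w : V) (huw : u ≠ w)
    (h₁ : G.Adj v u) (h₂ : G.Adj v w)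
    (G' : SimpleGraph V)
    (hG' : G' = SimpleGraph.fromEdgeSet
      ((G.edgeSet \ {s(v, u), s(v, w)}) ∪ {s(u, w)}))
    (hcdc : HasCycleDoubleCover G') :
    HasCycleDoubleCover G := by
  subst hG'
  refine hcdc.of_splitOff h₁ h₂ huw ?_ ?_ ?_ ?_ ?_
  · simp [SimpleGraph.edgeSet_fromEdgeSet, h₁.ne, h₂.ne, huw]
  · simp [SimpleGraph.edgeSet_fromEdgeSet, h₁.ne, h₂.ne]
  · simp [SimpleGraph.edgeSet_fromEdgeSet, huw]
  · intro e he hne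
    simp_all [SimpleGraph.edgeSet_fromEdgeSet]
  · intro e he hvu hvw
    simp [SimpleGraph.edgeSet_fromEdgeSet, he, hvu, hvw, G.not_isDiag_of_mem_edgeSet he]

/-- Splitting off: let `v` be a vertex of degree at least `4` and `e₁ = vu`, `e₂ = vw`
two edges at `v`; let `G′` be obtained from `G` by deleting `e₁`, `e₂` and adding the
edge `uw`.  If `G′` has a cycle double cover, then so does `G`. -/
theorem stmt_14 {V : Type} [Fintype V] [DecidableEq V]
    (G : SimpleGraph V) [DecidableRel G.Adj]
    (v u w : V) (huw : u ≠ w)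
    (h₁ : G.Adj v u) (h₂ : G.Adj v w)
    (hdeg : 4 ≤ G.degree v)
    (G' : SimpleGraph V)
    (hG' : G' = SimpleGraph.fromEdgeSet
      ((G.edgeSet \ {s(v, u), s(v, w)}) ∪ {s(u, w)}))
    (hcdc : HasCycleDoubleCover G') :
    HasCycleDoubleCover G :=
  stmt_14_general G v u w huw h₁ h₂ G' hG' hcdc
end
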